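/- Let X_1,…,X_M with X_m ∈ ℝ^{D_m×N} be matrices such that each X_m X_mᵀ is invertible, let L ∈ ℝ^{N×N} be symmetric, let γ ≥ 0, and let S ∈ ℝ^{d×N} satisfy S Sᵀ = I_d. Then the minimum over U_1,…,U_M (with U_m ∈ ℝ^{D_m×d}) of Σ_{m=1}^M ‖U_mᵀ X_m − S‖_F² + γ Tr(S L Sᵀ) equals M·d − Tr(S C Sᵀ), where C = Σ_{m=1}^M X_mᵀ (X_m X_mᵀ)^{-1} X_m − γ L, and the minimum is attained at U_m = (X_m X_mᵀ)^{-1} X_m Sᵀ for each m. -/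

import Mathlib

open Matrix BigOperators

/-- Squared Frobenius norm of a real matrix: `‖A‖_F² = ∑ᵢ ∑ⱼ Aᵢⱼ²`. -/
noncomputable def frobSq {m n : Type*} [Fintype m] [Fintype n]
    (A : Matrix m n ℝ) : ℝ :=
  ∑ i, ∑ j, (A i j) ^ 2

/-!
For each view the inner problem is the least-squares problem `min_U ‖Uᵀ X - S‖_F²`.
With `P = Xᵀ (X Xᵀ)⁻¹ X`, the orthogonal projection onto the row space of `X`, the candidate
`U* = (X Xᵀ)⁻¹ X Sᵀ` gives `U*ᵀ X = S P`, whose residual `S P - S` is orthogonal to the rows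
of `X`. Pythagoras then splits `‖Uᵀ X - S‖² = ‖(U - U*)ᵀ X‖² + ‖S P - S‖²`, so `U*` is optimal,
and `‖S P - S‖² = Tr(S Sᵀ) - Tr(S P Sᵀ) = d - Tr(S P Sᵀ)`. Summing over the views and adding the
`γ`-term, which does not depend on `U`, gives the value `M d - Tr(S C Sᵀ)`.
-/

section FrobSq

variable {m n : Type*} [Fintype m] [Fintype n]

lemma frobSq_eq_trace_mul_transpose (A : Matrix m n ℝ) : frobSq A = (A * Aᵀ).trace := by
  simp [frobSq, Matrix.trace, Matrix.mul_apply, sq]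

lemma frobSq_nonneg (A : Matrix m n ℝ) : 0 ≤ frobSq A :=
  Finset.sum_nonneg fun _ _ => Finset.sum_nonneg fun _ _ => sq_nonneg _

lemma frobSq_add_of_mul_transpose_eq_zero {A B : Matrix m n ℝ} (h : A * Bᵀ = 0) :
    frobSq (A + B) = frobSq A + frobSq B := by
  have h' : B * Aᵀ = 0 := by
    simpa only [transpose_mul, transpose_transpose, transpose_zero] using congrArg transpose h
  simp only [frobSq_eq_trace_mul_transpose, transpose_add, Matrix.add_mul, Matrix.mul_add, h, h',
    add_zero, zero_add, trace_add]

end FrobSq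

section RowProj

variable {R k m n : Type*} [CommRing R] [Fintype k] [DecidableEq k] [Fintype n]

noncomputable def rowProj (X : Matrix k n R) : Matrix n n R := Xᵀ * (X * Xᵀ)⁻¹ * X

variable {X : Matrix k n R}

lemma rowProj_transpose : (rowProj X)ᵀ = rowProj X := by
  simp only [rowProj, transpose_mul, transpose_nonsing_inv, transpose_transpose, Matrix.mul_assoc]

lemma mul_rowProj (hX : IsUnit (X * Xᵀ)) : X * rowProj X = X := by
  rw [rowProj, ← Matrix.mul_assoc, ← Matrix.mul_assoc,
    mul_nonsing_inv _ ((isUnit_iff_isUnit_det _).mp hX), Matrix.one_mul]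

lemma rowProj_mul_self (hX : IsUnit (X * Xᵀ)) : rowProj X * rowProj X = rowProj X := by
  nth_rw 1 [rowProj]
  rw [Matrix.mul_assoc _ X, mul_rowProj hX, rowProj]

lemma transpose_leastSquares_mul (S : Matrix m n R) :
    ((X * Xᵀ)⁻¹ * X * Sᵀ)ᵀ * X = S * rowProj X := by
  simp only [rowProj, transpose_mul, transpose_nonsing_inv, transpose_transpose, Matrix.mul_assoc]

lemma mul_transpose_rowProj_residual (hX : IsUnit (X * Xᵀ)) (S : Matrix m n R) :
    X * (S * rowProj X - S)ᵀ = 0 := by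
  rw [transpose_sub, transpose_mul, rowProj_transpose, Matrix.mul_sub, ← Matrix.mul_assoc,
    mul_rowProj hX, sub_self]

end RowProj

section LeastSquares

variable {k m n : Type*} [Fintype k] [DecidableEq k] [Fintype m] [Fintype n]
  {X : Matrix k n ℝ} (S : Matrix m n ℝ)

lemma frobSq_transpose_mul_sub_eq_add (hX : IsUnit (X * Xᵀ)) (U : Matrix k m ℝ) :
    frobSq (Uᵀ * X - S)
      = frobSq ((U - (X * Xᵀ)⁻¹ * X * Sᵀ)ᵀ * X)
        + frobSq (((X * Xᵀ)⁻¹ * X * Sᵀ)ᵀ * X - S) := by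
  rw [transpose_leastSquares_mul, ← frobSq_add_of_mul_transpose_eq_zero]
  · rw [transpose_sub, Matrix.sub_mul, transpose_leastSquares_mul, sub_add_sub_cancel]
  · rw [Matrix.mul_assoc, mul_transpose_rowProj_residual hX S, Matrix.mul_zero]

lemma frobSq_leastSquares_residual [DecidableEq m] (hX : IsUnit (X * Xᵀ)) (hS : S * Sᵀ = 1) :
    frobSq (((X * Xᵀ)⁻¹ * X * Sᵀ)ᵀ * X - S)
      = Fintype.card m - (S * rowProj X * Sᵀ).trace := by
  have hresidual : (S * rowProj X - S) * (S * rowProj X - S)ᵀ = S * Sᵀ - S * rowProj X * Sᵀ := by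
    rw [transpose_sub, transpose_mul, rowProj_transpose, Matrix.mul_sub, Matrix.sub_mul,
      Matrix.sub_mul, Matrix.mul_assoc S, ← Matrix.mul_assoc (rowProj X), rowProj_mul_self hX]
    simp only [Matrix.mul_assoc]
    abel
  rw [transpose_leastSquares_mul, frobSq_eq_trace_mul_transpose, hresidual, hS, trace_sub,
    trace_one]

end LeastSquares

theorem gmcca_inner_minimization_general {M N d : ℕ} (Dm : Fin M → ℕ)
    (X : ∀ m, Matrix (Fin (Dm m)) (Fin N) ℝ)
    (hX : ∀ m, IsUnit (X m * (X m)ᵀ))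
    (L : Matrix (Fin N) (Fin N) ℝ)
    (γ : ℝ)
    (S : Matrix (Fin d) (Fin N) ℝ) (hS : S * Sᵀ = 1) :
    (∀ U : ∀ m, Matrix (Fin (Dm m)) (Fin d) ℝ,
        (∑ m, frobSq ((((X m * (X m)ᵀ)⁻¹ * X m * Sᵀ)ᵀ) * X m - S))
            + γ * (S * L * Sᵀ).trace
          ≤ (∑ m, frobSq ((U m)ᵀ * X m - S)) + γ * (S * L * Sᵀ).trace) ∧
    (∑ m, frobSq ((((X m * (X m)ᵀ)⁻¹ * X m * Sᵀ)ᵀ) * X m - S))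
        + γ * (S * L * Sᵀ).trace
      = (M : ℝ) * (d : ℝ)
        - (S * ((∑ m, (X m)ᵀ * (X m * (X m)ᵀ)⁻¹ * X m) - γ • L) * Sᵀ).trace := by
  refine ⟨fun U => ?_, ?_⟩
  · gcongr with m
    rw [frobSq_transpose_mul_sub_eq_add S (hX m) (U m)]
    exact le_add_of_nonneg_left (frobSq_nonneg _)
  · simp only [frobSq_leastSquares_residual S (hX _) hS, rowProj, Fintype.card_fin,
      Matrix.mul_sub, Matrix.sub_mul, Matrix.mul_sum, Matrix.sum_mul, Matrix.mul_smul,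
      Matrix.smul_mul, trace_sub, trace_sum, trace_smul, smul_eq_mul, Finset.sum_sub_distrib,
      Finset.sum_const, Finset.card_univ, nsmul_eq_mul]
    ring

/-- For fixed `S` with `S Sᵀ = I`, the GMCCA objective
`∑ₘ ‖Uₘᵀ Xₘ - S‖_F² + γ Tr(S L Sᵀ)` is minimized over the loading matrices at
`Uₘ = (Xₘ Xₘᵀ)⁻¹ Xₘ Sᵀ`, with minimum value `M d - Tr(S C Sᵀ)`, where
`C = ∑ₘ Xₘᵀ (Xₘ Xₘᵀ)⁻¹ Xₘ - γ L`. -/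
theorem gmcca_inner_minimization {M N d : ℕ} (Dm : Fin M → ℕ)
    (X : ∀ m, Matrix (Fin (Dm m)) (Fin N) ℝ)
    (hX : ∀ m, IsUnit (X m * (X m)ᵀ))
    (L : Matrix (Fin N) (Fin N) ℝ) (hL : L.IsSymm)
    (γ : ℝ) (hγ : 0 ≤ γ)
    (S : Matrix (Fin d) (Fin N) ℝ) (hS : S * Sᵀ = 1) :
    (∀ U : ∀ m, Matrix (Fin (Dm m)) (Fin d) ℝ,
        (∑ m, frobSq ((((X m * (X m)ᵀ)⁻¹ * X m * Sᵀ)ᵀ) * X m - S))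
            + γ * (S * L * Sᵀ).trace
          ≤ (∑ m, frobSq ((U m)ᵀ * X m - S)) + γ * (S * L * Sᵀ).trace) ∧
    (∑ m, frobSq ((((X m * (X m)ᵀ)⁻¹ * X m * Sᵀ)ᵀ) * X m - S))
        + γ * (S * L * Sᵀ).trace
      = (M : ℝ) * (d : ℝ)
        - (S * ((∑ m, (X m)ᵀ * (X m * (X m)ᵀ)⁻¹ * X m) - γ • L) * Sᵀ).trace :=
  gmcca_inner_minimization_general Dm X hX L γ S hS
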